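/- arXiv:0807.3546 — 8 statements merged into one kernel-verified Lean document; each statement's English description precedes it below -/
import Mathlib

section
/- Let G be a finite group acting on a finite nonempty set X, let p be a prime, P a Sylow p-subgroup of G, and N = N_G(P) the normalizer of P in G. Then the number of G-orbits of X whose cardinality is coprime to p equals the number of N-orbits of X whose cardinality is coprime to p. -/
/-!
A `G`-orbit has order prime to `p` iff some Sylow `p`-subgroup fixes one of its points, i.e.
(after conjugating that Sylow subgroup to `P`) iff it meets the fixed points of `P`. Since `P` is
the unique Sylow `p`-subgroup of `N = N_G(P)`, an `N`-orbit has order prime to `p` iff `P` fixes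
its points. Hence sending an `N`-orbit to the `G`-orbit containing it is onto the `G`-orbits of
order prime to `p`. It is injective on those `N`-orbits because two `P`-fixed points `x` and
`g • x` are already `N`-conjugate: `P` and `gPg⁻¹` are Sylow subgroups of the stabilizer of
`g • x`, so `s • gPg⁻¹ = P` for some `s` there, and then `s * g ∈ N` maps `x` to `g • x`.
-/

open MulAction Subgroup

section

variable {p : ℕ} {G : Type*} [Group G]

theorem Sylow.smul_le_stabilizer_smul {X : Type*} [MulAction G X] {R : Sylow p G} {x : X}
    (hR : (R : Subgroup G) ≤ stabilizer G x) (g : G) :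
    ((g • R : Sylow p G) : Subgroup G) ≤ stabilizer G (g • x) := by
  rw [Sylow.coe_subgroup_smul, stabilizer_smul_eq_stabilizer_map_conj,
    Subgroup.pointwise_smul_def]
  exact map_mono hR

variable [Fact p.Prime] [Finite G]

theorem Sylow.exists_le_of_not_dvd_index {H : Subgroup G} (h : ¬ p ∣ H.index) :
    ∃ R : Sylow p G, (R : Subgroup G) ≤ H := by
  obtain ⟨Q⟩ : Nonempty (Sylow p H) := inferInstance
  have hQ : ¬ p ∣ ((Q : Subgroup H).map H.subtype).index := by
    rw [index_map_subtype]
    exact (Fact.out : p.Prime).not_dvd_mul Q.not_dvd_index h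
  exact ⟨(Q.2.map H.subtype).toSylow hQ, map_subtype_le _⟩

namespace MulAction

variable {X : Type*} [MulAction G X]

theorem coprime_card_orbit_iff_exists_sylow_le_stabilizer (x : X) :
    p.Coprime (Nat.card (orbit G x)) ↔ ∃ R : Sylow p G, (R : Subgroup G) ≤ stabilizer G x := by
  rw [Nat.card_coe_set_eq, ← index_stabilizer, (Fact.out : p.Prime).coprime_iff_not_dvd]
  exact ⟨Sylow.exists_le_of_not_dvd_index,
    fun ⟨R, hR⟩ hdvd => R.not_dvd_index (hdvd.trans (index_dvd_of_le hR))⟩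

theorem coprime_card_orbit_iff_le_stabilizer_of_normal (Q : Sylow p G)
    [hQ : (Q : Subgroup G).Normal] (x : X) :
    p.Coprime (Nat.card (orbit G x)) ↔ (Q : Subgroup G) ≤ stabilizer G x := by
  have := Q.unique_of_normal hQ
  rw [coprime_card_orbit_iff_exists_sylow_le_stabilizer]
  exact ⟨fun ⟨R, hR⟩ => Subsingleton.elim R Q ▸ hR, fun h => ⟨Q, h⟩⟩

theorem coprime_card_orbit_normalizer_iff (P : Sylow p G) (x : X) :
    p.Coprime (Nat.card (orbit (normalizer ((P : Subgroup G) : Set G)) x)) ↔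
      (P : Subgroup G) ≤ stabilizer G x := by
  set N := normalizer ((P : Subgroup G) : Set G)
  set Q : Sylow p N := P.subtype le_normalizer
  have : (Q : Subgroup N).Normal := by
    rw [Sylow.coe_subtype]
    exact normal_in_normalizer
  rw [coprime_card_orbit_iff_le_stabilizer_of_normal Q, Sylow.coe_subtype]
  exact ⟨fun h g hg => h (show ⟨g, le_normalizer hg⟩ ∈ (P : Subgroup G).subgroupOf N from hg),
    fun h n hn => h hn⟩

theorem exists_sylow_le_stabilizer_smul (P : Sylow p G) {x : X}
    (hx : p.Coprime (Nat.card (orbit G x))) : ∃ g : G, (P : Subgroup G) ≤ stabilizer G (g • x) := by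
  obtain ⟨R, hR⟩ := (coprime_card_orbit_iff_exists_sylow_le_stabilizer x).mp hx
  obtain ⟨g, rfl⟩ := exists_smul_eq G R P
  exact ⟨g, Sylow.smul_le_stabilizer_smul hR g⟩

theorem exists_mem_normalizer_smul_eq (P : Sylow p G) {x : X} {g : G}
    (hx : (P : Subgroup G) ≤ stabilizer G x) (hgx : (P : Subgroup G) ≤ stabilizer G (g • x)) :
    ∃ n ∈ normalizer ((P : Subgroup G) : Set G), n • x = g • x := by
  obtain ⟨s, hs⟩ := exists_smul_eq (stabilizer G (g • x))
    ((g • P).subtype (Sylow.smul_le_stabilizer_smul hx g)) (P.subtype hgx)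
  simp_rw [Sylow.smul_subtype, Subgroup.smul_def, smul_smul] at hs
  refine ⟨s * g, Sylow.smul_eq_iff_mem_normalizer.mp (Sylow.subtype_injective hs), ?_⟩
  rw [mul_smul]
  exact s.2

end MulAction

end

theorem mckay_orbit_count_general {p : ℕ} [Fact p.Prime] {G : Type*} [Group G] [Fintype G]
    {X : Type*} [MulAction G X] (P : Sylow p G) :
    Nat.card {ω : MulAction.orbitRel.Quotient G X // p.Coprime (Nat.card ω.orbit)}
      = Nat.card {ω : MulAction.orbitRel.Quotient (Subgroup.normalizer ((P : Subgroup G) : Set G)) X //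
          p.Coprime (Nat.card ω.orbit)} := by
  set N := normalizer ((P : Subgroup G) : Set G)
  let π : orbitRel.Quotient N X → orbitRel.Quotient G X := Setoid.map_of_le (orbitRel_subgroup_le N)
  have maps_to : ∀ ω : orbitRel.Quotient N X, p.Coprime (Nat.card ω.orbit) →
      p.Coprime (Nat.card (π ω).orbit) := by
    rintro ⟨x⟩ hx
    exact (coprime_card_orbit_iff_exists_sylow_le_stabilizer x).mpr
      ⟨P, (coprime_card_orbit_normalizer_iff P x).mp hx⟩
  refine (Nat.card_eq_of_bijective (Subtype.map π maps_to) ⟨?injective, ?surjective⟩).symm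
  case injective =>
    rintro ⟨⟨x⟩, hx⟩ ⟨⟨y⟩, hy⟩ hxy
    obtain ⟨g, rfl⟩ := Quotient.exact (congrArg Subtype.val hxy)
    obtain ⟨n, hn, hnx⟩ := exists_mem_normalizer_smul_eq P
      ((coprime_card_orbit_normalizer_iff P y).mp hy)
      ((coprime_card_orbit_normalizer_iff P _).mp hx)
    exact Subtype.ext (Quotient.sound ⟨⟨n, hn⟩, hnx⟩)
  case surjective =>
    rintro ⟨⟨x⟩, hx⟩
    obtain ⟨g, hg⟩ := exists_sylow_le_stabilizer_smul P hx
    exact ⟨⟨⟦g • x⟧, (coprime_card_orbit_normalizer_iff P _).mpr hg⟩,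
      Subtype.ext (Quotient.sound ⟨g, rfl⟩)⟩

/-- Lemma 2.4: the number of `G`-orbits of `X` of cardinality coprime to `p` equals
the number of `N = N_G(P)`-orbits of `X` of cardinality coprime to `p`. -/
theorem mckay_orbit_count {p : ℕ} [Fact p.Prime] {G : Type*} [Group G] [Fintype G]
    {X : Type*} [Fintype X] [Nonempty X] [MulAction G X] (P : Sylow p G) :
    Nat.card {ω : MulAction.orbitRel.Quotient G X // p.Coprime (Nat.card ω.orbit)}
      = Nat.card {ω : MulAction.orbitRel.Quotient (Subgroup.normalizer ((P : Subgroup G) : Set G)) X //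
          p.Coprime (Nat.card ω.orbit)} :=
  mckay_orbit_count_general P
end

section
/- Let G be a finite group acting transitively on a finite nonempty set X, let p be a prime, P a Sylow p-subgroup of G, and N = N_G(P). If p divides the cardinality of X, then every N-orbit of X has cardinality divisible by p. -/
/-! A point fixed by a Sylow `p`-subgroup `P` would have a stabilizer containing `P`, so its
index `|X|` would divide `[G : P]`, which is prime to `p`. Hence `P` acts without fixed points
on any orbit of a subgroup `H ≥ P`, and since `P` is a `p`-group, the size of such an orbit is
congruent mod `p` to its number of `P`-fixed points, namely zero. -/

open MulAction

namespace Sylow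

variable {p : ℕ} [Fact p.Prime] {G : Type*} [Group G] {X : Type*} [MulAction G X]
  [IsPretransitive G X]

theorem not_le_stabilizer_of_dvd_card (P : Sylow p G) [(P : Subgroup G).FiniteIndex]
    (h : p ∣ Nat.card X) (y : X) : ¬ (P : Subgroup G) ≤ stabilizer G y := fun hle =>
  P.not_dvd_index <| (index_stabilizer_of_transitive G y ▸ h).trans (Subgroup.index_dvd_of_le hle)

theorem dvd_card_orbit_of_le (P : Sylow p G) [(P : Subgroup G).FiniteIndex] {H : Subgroup G}
    (hPH : (P : Subgroup G) ≤ H) (h : p ∣ Nat.card X) (x : X) :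
    p ∣ Nat.card (orbit H x) := by
  by_contra hx
  obtain ⟨⟨y, _⟩, hy⟩ :=
    (P.subtype hPH).isPGroup'.nonempty_fixed_point_of_prime_not_dvd_card (orbit H x) hx
  refine P.not_le_stabilizer_of_dvd_card h y fun g hg =>
    congrArg Subtype.val (hy ⟨⟨g, hPH hg⟩, ?_⟩)
  rwa [coe_subtype, Subgroup.mem_subgroupOf]

end Sylow

theorem norbit_card_dvd_of_dvd_general {p : ℕ} [Fact p.Prime] {G : Type*} [Group G] [Fintype G]
    {X : Type*} [MulAction G X] [MulAction.IsPretransitive G X]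
    (P : Sylow p G) (h : p ∣ Nat.card X) (x : X) :
    p ∣ Nat.card (MulAction.orbit (Subgroup.normalizer ((P : Subgroup G) : Set G)) x) :=
  P.dvd_card_orbit_of_le Subgroup.le_normalizer h x

/-- If `G` acts transitively on `X` and `p ∣ |X|`, then every orbit of
`N = N_G(P)` on `X` has cardinality divisible by `p`. -/
theorem norbit_card_dvd_of_dvd {p : ℕ} [Fact p.Prime] {G : Type*} [Group G] [Fintype G]
    {X : Type*} [Fintype X] [Nonempty X] [MulAction G X] [MulAction.IsPretransitive G X]
    (P : Sylow p G) (h : p ∣ Nat.card X) (x : X) :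
    p ∣ Nat.card (MulAction.orbit (Subgroup.normalizer ((P : Subgroup G) : Set G)) x) :=
  norbit_card_dvd_of_dvd_general P h x
end

section
/- Let G be a finite group acting transitively on a finite nonempty set X, let p be a prime, P a Sylow p-subgroup of G, and N = N_G(P). If p does not divide the cardinality of X, then there is exactly one N-orbit of X whose cardinality is coprime to p. -/
/-!
A point fixed by `P` exists because `p ∤ |X|`, and its `N`-orbit has size dividing
`|N : P|`, hence prime to `p`. Conversely, `P` has a fixed point in every `N`-orbit of size
prime to `p`, and any two `P`-fixed points `x` and `y = g • x` lie in one `N`-orbit: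
`P` and `g • P` are Sylow subgroups of the stabilizer of `y`, so `k • g • P = P` for some
`k` fixing `y`, and then `k * g ∈ N` sends `x` to `y` (a Frattini argument).
-/

open MulAction Subgroup

section

variable {p : ℕ} [Fact p.Prime] {G X : Type*} [Group G] [MulAction G X]

theorem Sylow.not_dvd_card_orbit_of_le_stabilizer [Finite G] (P : Sylow p G) {H : Subgroup G}
    (hPH : (P : Subgroup G) ≤ H) {x : X} (hx : (P : Subgroup G) ≤ stabilizer G x) :
    ¬ p ∣ Nat.card (orbit H x) := by
  have hP : ((P.subtype hPH : Sylow p H) : Subgroup H) ≤ stabilizer H x := fun h hh => hx hh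
  rw [Nat.card_congr (orbitEquivQuotientStabilizer H x), ← index]
  exact fun hdvd => (P.subtype hPH).not_dvd_index (hdvd.trans (index_dvd_of_le hP))

theorem IsPGroup.exists_mem_orbit_le_stabilizer {Q H : Subgroup G} (hQ : IsPGroup p Q)
    (hQH : Q ≤ H) (ω : orbitRel.Quotient H X) (hω : ¬ p ∣ Nat.card ω.orbit) :
    ∃ x ∈ ω.orbit, Q ≤ stabilizer G x := by
  obtain ⟨⟨x, hxω⟩, hx⟩ :=
    (hQ.comap_subtype (K := H)).nonempty_fixed_point_of_prime_not_dvd_card ω.orbit hω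
  exact ⟨x, hxω, fun q hq => congrArg Subtype.val (hx ⟨⟨q, hQH hq⟩, hq⟩)⟩

theorem Sylow.exists_mem_normalizer_smul_eq [Finite G] (P : Sylow p G) {x y : X}
    (hxy : y ∈ orbit G x) (hx : (P : Subgroup G) ≤ stabilizer G x)
    (hy : (P : Subgroup G) ≤ stabilizer G y) :
    ∃ n ∈ normalizer (P : Set G), n • x = y := by
  obtain ⟨g, rfl⟩ := hxy
  have hgP : ((g • P : Sylow p G) : Subgroup G) ≤ stabilizer G (g • x) := by
    rw [Sylow.coe_subgroup_smul, Subgroup.pointwise_smul_def,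
      stabilizer_smul_eq_stabilizer_map_conj]
    exact map_mono hx
  obtain ⟨k, hk⟩ := exists_smul_eq (stabilizer G (g • x)) ((g • P).subtype hgP) (P.subtype hy)
  simp_rw [Sylow.smul_subtype, Subgroup.smul_def, smul_smul] at hk
  refine ⟨k * g, Sylow.smul_eq_iff_mem_normalizer.mp (Sylow.subtype_injective hk), ?_⟩
  rw [mul_smul]
  exact k.2

end

theorem existsUnique_norbit_coprime_general {p : ℕ} [Fact p.Prime] {G : Type*} [Group G] [Fintype G]
    {X : Type*} [MulAction G X] [MulAction.IsPretransitive G X]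
    (P : Sylow p G) (h : ¬ p ∣ Nat.card X) :
    ∃! ω : MulAction.orbitRel.Quotient (Subgroup.normalizer ((P : Subgroup G) : Set G)) X,
      p.Coprime (Nat.card ω.orbit) := by
  have hp : p.Prime := Fact.out
  obtain ⟨x₀, hx₀⟩ := P.isPGroup'.nonempty_fixed_point_of_prime_not_dvd_card X h
  have hPx₀ : (P : Subgroup G) ≤ stabilizer G x₀ := fun g hg => hx₀ ⟨g, hg⟩
  refine ⟨Quotient.mk'' x₀, ?_, fun ω hω => ?_⟩
  · exact hp.coprime_iff_not_dvd.mpr (P.not_dvd_card_orbit_of_le_stabilizer le_normalizer hPx₀)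
  obtain ⟨y, hyω, hPy⟩ := P.isPGroup'.exists_mem_orbit_le_stabilizer le_normalizer ω
    (hp.coprime_iff_not_dvd.mp hω)
  obtain ⟨n, hn, hnx₀⟩ := P.exists_mem_normalizer_smul_eq (exists_smul_eq G x₀ y) hPx₀ hPy
  rw [← orbitRel.Quotient.mem_orbit.mp hyω, Quotient.eq'']
  exact ⟨⟨n, hn⟩, hnx₀⟩

/-- If `G` acts transitively on `X` and `p ∤ |X|`, then there is exactly one orbit of
`N = N_G(P)` on `X` whose cardinality is coprime to `p`. -/
theorem existsUnique_norbit_coprime {p : ℕ} [Fact p.Prime] {G : Type*} [Group G] [Fintype G]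
    {X : Type*} [Fintype X] [Nonempty X] [MulAction G X] [MulAction.IsPretransitive G X]
    (P : Sylow p G) (h : ¬ p ∣ Nat.card X) :
    ∃! ω : MulAction.orbitRel.Quotient (Subgroup.normalizer ((P : Subgroup G) : Set G)) X,
      p.Coprime (Nat.card ω.orbit) :=
  existsUnique_norbit_coprime_general P h
end

section
/- Let G be a finite group acting transitively on a finite nonempty set X, let p be a prime, P a Sylow p-subgroup of G, and N = N_G(P). If x, y ∈ X are such that the N-orbit of x and the N-orbit of y both have cardinality coprime to p, then x and y lie in the same N-orbit. -/
/-!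
A `p`-group acting on the `N`-orbit of `x`, whose size is prime to `p`, has a fixed point there;
as `N` normalizes `P`, the `P`-fixed points are `N`-stable, so `P` fixes `x`, and likewise `y`.
Writing `y = g • x`, both `P` and `gPg⁻¹` are Sylow subgroups of `Stab_G(y)`, hence conjugate by
some `h ∈ Stab_G(y)`; then `hg ∈ N` and `(hg) • x = y`.
-/

open MulAction Subgroup

namespace MulAction

variable {G X : Type*} [Group G] [MulAction G X]

theorem map_conj_le_stabilizer_smul {H : Subgroup G} {x : X} (hH : H ≤ stabilizer G x) (g : G) :
    H.map (MulAut.conj g).toMonoidHom ≤ stabilizer G (g • x) := by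
  rw [stabilizer_smul_eq_stabilizer_map_conj]
  exact map_mono hH

theorem le_stabilizer_of_mem_orbit_normalizer {H : Subgroup G} {x y : X}
    (hH : H ≤ stabilizer G x) (hy : y ∈ orbit (normalizer (H : Set G)) x) :
    H ≤ stabilizer G y := by
  obtain ⟨⟨n, hn⟩, rfl⟩ := hy
  have := map_conj_le_stabilizer_smul hH n
  rwa [show H.map (MulAut.conj n).toMonoidHom = H from mem_normalizer_iff_map_conj_eq.mp hn] at this

end MulAction

section

variable {p : ℕ} [Fact p.Prime] {G X : Type*} [Group G] [MulAction G X]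

theorem IsPGroup.le_stabilizer_of_not_dvd_card_orbit_normalizer {P : Subgroup G}
    (hP : IsPGroup p P) {x : X} (hx : ¬p ∣ Nat.card (orbit (normalizer (P : Set G)) x)) :
    P ≤ stabilizer G x := by
  set N := normalizer (P : Set G)
  have hPN : IsPGroup p (P.subgroupOf N) := hP.comap_of_injective N.subtype N.subtype_injective
  obtain ⟨z, hz⟩ := hPN.nonempty_fixed_point_of_prime_not_dvd_card _ hx
  have hPz : P ≤ stabilizer G (z : X) := fun g hg =>
    congrArg Subtype.val (hz ⟨⟨g, le_normalizer hg⟩, mem_subgroupOf.mpr hg⟩)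
  exact le_stabilizer_of_mem_orbit_normalizer hPz (mem_orbit_symm.mp z.2)

theorem Sylow.mem_orbit_normalizer_of_le_stabilizer [Finite G] (P : Sylow p G) {x y : X}
    (hxy : y ∈ orbit G x) (hx : P ≤ stabilizer G x) (hy : P ≤ stabilizer G y) :
    y ∈ orbit (normalizer (P : Set G)) x := by
  obtain ⟨g, rfl⟩ := hxy
  have hgP : (g • P : Sylow p G) ≤ stabilizer G (g • x) := by
    rw [Sylow.coe_subgroup_smul, Subgroup.pointwise_smul_def]
    exact map_conj_le_stabilizer_smul hx g
  obtain ⟨h, hh⟩ :=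
    exists_smul_eq (stabilizer G (g • x)) ((g • P).subtype hgP) (P.subtype hy)
  simp_rw [Sylow.smul_subtype, Subgroup.smul_def, smul_smul] at hh
  have hn : (h : G) * g ∈ normalizer (P : Set G) :=
    Sylow.smul_eq_iff_mem_normalizer.mp (Sylow.subtype_injective hh)
  exact ⟨⟨_, hn⟩, (mul_smul (h : G) g x).trans h.2⟩

end

theorem norbit_eq_of_coprime_general {p : ℕ} [Fact p.Prime] {G : Type*} [Group G] [Fintype G]
    {X : Type*} [MulAction G X] [MulAction.IsPretransitive G X]
    (P : Sylow p G) (x y : X)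
    (hx : p.Coprime (Nat.card (MulAction.orbit (Subgroup.normalizer ((P : Subgroup G) : Set G)) x)))
    (hy : p.Coprime (Nat.card (MulAction.orbit (Subgroup.normalizer ((P : Subgroup G) : Set G)) y))) :
    MulAction.orbit (Subgroup.normalizer ((P : Subgroup G) : Set G)) x
      = MulAction.orbit (Subgroup.normalizer ((P : Subgroup G) : Set G)) y := by
  have hp : p.Prime := Fact.out
  have hPx := P.isPGroup'.le_stabilizer_of_not_dvd_card_orbit_normalizer
    (hp.coprime_iff_not_dvd.mp hx)
  have hPy := P.isPGroup'.le_stabilizer_of_not_dvd_card_orbit_normalizer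
    (hp.coprime_iff_not_dvd.mp hy)
  exact (orbit_eq_iff.mpr
    (P.mem_orbit_normalizer_of_le_stabilizer (exists_smul_eq G x y) hPx hPy)).symm

/-- If `G` acts transitively on `X` and `x, y ∈ X` have `N = N_G(P)`-orbits of
cardinality coprime to `p`, then `x` and `y` lie in the same `N`-orbit. -/
theorem norbit_eq_of_coprime {p : ℕ} [Fact p.Prime] {G : Type*} [Group G] [Fintype G]
    {X : Type*} [Fintype X] [Nonempty X] [MulAction G X] [MulAction.IsPretransitive G X]
    (P : Sylow p G) (x y : X)
    (hx : p.Coprime (Nat.card (MulAction.orbit (Subgroup.normalizer ((P : Subgroup G) : Set G)) x)))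
    (hy : p.Coprime (Nat.card (MulAction.orbit (Subgroup.normalizer ((P : Subgroup G) : Set G)) y))) :
    MulAction.orbit (Subgroup.normalizer ((P : Subgroup G) : Set G)) x
      = MulAction.orbit (Subgroup.normalizer ((P : Subgroup G) : Set G)) y :=
  norbit_eq_of_coprime_general P x y hx hy
end

section
/- Let G be a finite group acting transitively on a finite nonempty set X, let p be a prime, P a Sylow p-subgroup of G, and N = N_G(P). If p does not divide the cardinality of X, then the set of fixed points of P in X is nonempty and is precisely the unique N-orbit of X of cardinality coprime to p; that is, Fix_P(X) is a single N-orbit and its cardinality is coprime to p. -/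
/-!
A fixed point `x` of `P` exists since `|Fix_P(X)| ≡ |X| (mod p)`. If `g • x` is also fixed by `P`,
then `P` and `gPg⁻¹` are Sylow subgroups of the stabilizer of `g • x`, hence conjugate by some `k`
there (Frattini argument); then `kg ∈ N` and `kg • x = g • x`, so `Fix_P(X)` is the `N`-orbit of `x`.
Conversely `P ≤ N` acts on any `N`-orbit of size prime to `p` with a fixed point, so such an orbit
meets, hence equals, `Fix_P(X)`.
-/

open MulAction Subgroup Pointwise

namespace MulAction

variable {G X : Type*} [Group G] [MulAction G X]

theorem mem_fixedPoints_subgroup_iff_le_stabilizer {H : Subgroup G} {x : X} :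
    x ∈ fixedPoints H X ↔ H ≤ stabilizer G x :=
  ⟨fun hx h hh => hx ⟨h, hh⟩, fun hle h => hle h.2⟩

theorem smul_mem_fixedPoints_of_mem_normalizer {H : Subgroup G} {g : G}
    (hg : g ∈ normalizer (H : Set G)) {x : X} (hx : x ∈ fixedPoints H X) :
    g • x ∈ fixedPoints H X := by
  rintro ⟨h, hh⟩
  have hconj : g⁻¹ * h * g ∈ H := by
    simpa using (mem_normalizer_iff''.mp hg h).mp hh
  calc h • g • x = g • (g⁻¹ * h * g) • x := by simp [smul_smul, mul_assoc]
    _ = g • x := congrArg (g • ·) (hx ⟨_, hconj⟩)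

theorem orbit_normalizer_subset_fixedPoints {H : Subgroup G} {x : X}
    (hx : x ∈ fixedPoints H X) : orbit (normalizer (H : Set G)) x ⊆ fixedPoints H X := by
  rintro - ⟨n, rfl⟩
  exact smul_mem_fixedPoints_of_mem_normalizer n.2 hx

end MulAction

namespace IsPGroup

variable {p : ℕ} [Fact p.Prime] {G X : Type*} [Group G] [MulAction G X]

theorem exists_mem_orbit_mem_fixedPoints {H K : Subgroup G} (hH : IsPGroup p H) (hHK : H ≤ K)
    {y : X} (hy : ¬ p ∣ Nat.card (orbit K y)) :
    ∃ z ∈ orbit K y, z ∈ fixedPoints H X := by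
  obtain ⟨z, hz⟩ := (hH.comap_subtype (K := K)).nonempty_fixed_point_of_prime_not_dvd_card _ hy
  exact ⟨z, z.2, fun ⟨h, hh⟩ => congrArg Subtype.val (hz ⟨⟨h, hHK hh⟩, mem_subgroupOf.mpr hh⟩)⟩

end IsPGroup

namespace Sylow

variable {p : ℕ} [Fact p.Prime] {G X : Type*} [Group G] [Finite G] [MulAction G X]

theorem exists_mem_normalizer_smul_eq_s5 (P : Sylow p G) {x : X} (hx : x ∈ fixedPoints P X)
    {g : G} (hgx : g • x ∈ fixedPoints P X) :
    ∃ n ∈ normalizer ((P : Subgroup G) : Set G), n • x = g • x := by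
  rw [mem_fixedPoints_subgroup_iff_le_stabilizer] at hx hgx
  have hgP : ((g • P : Sylow p G) : Subgroup G) ≤ stabilizer G (g • x) := by
    rw [coe_subgroup_smul, stabilizer_smul_eq_stabilizer_map_conj, ← pointwise_smul_def]
    exact pointwise_smul_le_pointwise_smul_iff.mpr hx
  obtain ⟨k, hk⟩ := exists_smul_eq (stabilizer G (g • x)) ((g • P).subtype hgP) (P.subtype hgx)
  simp_rw [smul_subtype, Subgroup.smul_def, smul_smul] at hk
  exact ⟨k * g, smul_eq_iff_mem_normalizer.mp (subtype_injective hk), by rw [mul_smul, k.2]⟩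

theorem fixedPoints_eq_orbit_normalizer [IsPretransitive G X] (P : Sylow p G) {x : X}
    (hx : x ∈ fixedPoints P X) :
    fixedPoints P X = orbit (normalizer ((P : Subgroup G) : Set G)) x := by
  refine Set.Subset.antisymm (fun y hy => ?_) (orbit_normalizer_subset_fixedPoints hx)
  obtain ⟨g, rfl⟩ := exists_smul_eq G x y
  obtain ⟨n, hn, hnx⟩ := P.exists_mem_normalizer_smul_eq_s5 hx hy
  exact ⟨⟨n, hn⟩, hnx⟩

end Sylow

theorem fixedPoints_eq_unique_coprime_norbit_general {p : ℕ} [Fact p.Prime]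
    {G : Type*} [Group G] [Fintype G]
    {X : Type*} [Fintype X] [MulAction G X] [MulAction.IsPretransitive G X]
    (P : Sylow p G) (h : ¬ p ∣ Nat.card X) :
    (MulAction.fixedPoints (P : Subgroup G) X).Nonempty ∧
      (∃ x : X, MulAction.fixedPoints (P : Subgroup G) X
          = MulAction.orbit (Subgroup.normalizer ((P : Subgroup G) : Set G)) x) ∧
      p.Coprime (Nat.card (MulAction.fixedPoints (P : Subgroup G) X)) ∧
      ∀ y : X, p.Coprime (Nat.card (MulAction.orbit (Subgroup.normalizer ((P : Subgroup G) : Set G)) y)) →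
        MulAction.orbit (Subgroup.normalizer ((P : Subgroup G) : Set G)) y
          = MulAction.fixedPoints (P : Subgroup G) X := by
  have hp : p.Prime := Fact.out
  obtain ⟨x, hx⟩ := P.2.nonempty_fixed_point_of_prime_not_dvd_card X h
  have hfix : ¬ p ∣ Nat.card (fixedPoints P X) :=
    h ∘ ((P.2.card_modEq_card_fixedPoints X).dvd_iff dvd_rfl).mpr
  refine ⟨⟨x, hx⟩, ⟨x, P.fixedPoints_eq_orbit_normalizer hx⟩, hp.coprime_iff_not_dvd.mpr hfix,
    fun y hy => ?_⟩
  obtain ⟨z, hzy, hz⟩ :=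
    P.2.exists_mem_orbit_mem_fixedPoints le_normalizer (hp.coprime_iff_not_dvd.mp hy)
  rw [← orbit_eq_iff.mpr hzy, P.fixedPoints_eq_orbit_normalizer hz]

/-- If `G` acts transitively on `X` and `p ∤ |X|`, then the fixed-point set of `P` in `X`
is nonempty, is a single `N = N_G(P)`-orbit, has cardinality coprime to `p`, and is the
unique `N`-orbit of cardinality coprime to `p`. -/
theorem fixedPoints_eq_unique_coprime_norbit {p : ℕ} [Fact p.Prime]
    {G : Type*} [Group G] [Fintype G]
    {X : Type*} [Fintype X] [Nonempty X] [MulAction G X] [MulAction.IsPretransitive G X]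
    (P : Sylow p G) (h : ¬ p ∣ Nat.card X) :
    (MulAction.fixedPoints (P : Subgroup G) X).Nonempty ∧
      (∃ x : X, MulAction.fixedPoints (P : Subgroup G) X
          = MulAction.orbit (Subgroup.normalizer ((P : Subgroup G) : Set G)) x) ∧
      p.Coprime (Nat.card (MulAction.fixedPoints (P : Subgroup G) X)) ∧
      ∀ y : X, p.Coprime (Nat.card (MulAction.orbit (Subgroup.normalizer ((P : Subgroup G) : Set G)) y)) →
        MulAction.orbit (Subgroup.normalizer ((P : Subgroup G) : Set G)) y
          = MulAction.fixedPoints (P : Subgroup G) X :=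
  fixedPoints_eq_unique_coprime_norbit_general P h
end

section
/- Let G be a finite group, p a prime, P a Sylow p-subgroup of G, and N = N_G(P). Let N act on G by conjugation. If g ∈ G is such that the N-orbit of g under conjugation has cardinality coprime to p, then every element of that orbit centralizes P; in particular the whole N-orbit is contained in C_G(P) ⊆ N. -/
/-!
The Sylow subgroup `P ≤ N_G(P)` acts by conjugation on the `N_G(P)`-orbit of `g`. A `p`-group
acting on a set of size prime to `p` has a fixed point, so some conjugate `n g n⁻¹` with
`n ∈ N_G(P)` centralizes `P`. Since `C_G(P)` is normal in `N_G(P)`, all of the orbit does.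
-/

open Subgroup

section

variable {G : Type*} [Group G]

theorem IsPGroup.exists_mem_centralizer_of_not_dvd_card {p : ℕ} [Fact p.Prime] {Q : Subgroup G}
    (hQ : IsPGroup p Q) {O : Set G} (hO : ∀ q ∈ Q, ∀ x ∈ O, q * x * q⁻¹ ∈ O)
    (hpO : ¬p ∣ Nat.card O) : ∃ x ∈ O, x ∈ centralizer (Q : Set G) := by
  let _ : MulAction Q O :=
    { smul q x := ⟨q * x * q⁻¹, hO q q.2 x x.2⟩
      one_smul x := Subtype.ext (show 1 * (x : G) * 1⁻¹ = x by group)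
      mul_smul q r x := Subtype.ext
        (show (q * r : G) * x * (q * r : G)⁻¹ = q * (r * x * (r : G)⁻¹) * (q : G)⁻¹ by group) }
  obtain ⟨⟨x, hxO⟩, hx⟩ := hQ.nonempty_fixed_point_of_prime_not_dvd_card O hpO
  exact ⟨x, hxO, fun q hq => mul_inv_eq_iff_eq_mul.mp (congrArg Subtype.val (hx ⟨q, hq⟩))⟩

theorem Subgroup.conj_mem_centralizer_of_mem_normalizer {s : Set G} {n x : G}
    (hn : n ∈ normalizer s) (hx : x ∈ centralizer s) : n * x * n⁻¹ ∈ centralizer s :=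
  (normal_subgroupOf_iff (centralizer_le_normalizer s)).mp inferInstance x n hx hn

end

theorem coprime_conj_norbit_centralizes_general {p : ℕ} [Fact p.Prime]
    {G : Type*} [Group G] (P : Sylow p G) (g : G)
    (h : p.Coprime
      (Nat.card {h : G | ∃ n ∈ Subgroup.normalizer ((P : Subgroup G) : Set G), n * g * n⁻¹ = h})) :
    (∀ h' ∈ {h : G | ∃ n ∈ Subgroup.normalizer ((P : Subgroup G) : Set G), n * g * n⁻¹ = h},
        h' ∈ Subgroup.centralizer ((P : Subgroup G) : Set G)) ∧
      Subgroup.centralizer ((P : Subgroup G) : Set G) ≤ Subgroup.normalizer ((P : Subgroup G) : Set G) := by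
  set O := {h : G | ∃ n ∈ normalizer ((P : Subgroup G) : Set G), n * g * n⁻¹ = h}
  have hstable : ∀ q ∈ (P : Subgroup G), ∀ x ∈ O, q * x * q⁻¹ ∈ O := by
    rintro q hq _ ⟨n, hn, rfl⟩
    exact ⟨q * n, mul_mem (le_normalizer hq) hn, by group⟩
  obtain ⟨_, ⟨n, hn, rfl⟩, hfixed⟩ := P.isPGroup'.exists_mem_centralizer_of_not_dvd_card hstable
    ((Nat.Prime.coprime_iff_not_dvd Fact.out).mp h)
  refine ⟨?_, centralizer_le_normalizer _⟩
  rintro _ ⟨m, hm, rfl⟩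
  have hconj := conj_mem_centralizer_of_mem_normalizer (mul_mem hm (inv_mem hn)) hfixed
  rwa [show m * n⁻¹ * (n * g * n⁻¹) * (m * n⁻¹)⁻¹ = m * g * m⁻¹ by group] at hconj

/-- Let `N = N_G(P)` act on `G` by conjugation.  If the `N`-orbit of `g` has cardinality
coprime to `p`, then every element of that orbit centralizes `P`; in particular the whole
orbit lies in `C_G(P)`, and `C_G(P) ≤ N`. -/
theorem coprime_conj_norbit_centralizes {p : ℕ} [Fact p.Prime]
    {G : Type*} [Group G] [Fintype G] (P : Sylow p G) (g : G)
    (h : p.Coprime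
      (Nat.card {h : G | ∃ n ∈ Subgroup.normalizer ((P : Subgroup G) : Set G), n * g * n⁻¹ = h})) :
    (∀ h' ∈ {h : G | ∃ n ∈ Subgroup.normalizer ((P : Subgroup G) : Set G), n * g * n⁻¹ = h},
        h' ∈ Subgroup.centralizer ((P : Subgroup G) : Set G)) ∧
      Subgroup.centralizer ((P : Subgroup G) : Set G) ≤ Subgroup.normalizer ((P : Subgroup G) : Set G) :=
  coprime_conj_norbit_centralizes_general P g h
end

section
/- Assume the McKay Conjecture holds for the prime p: for every finite group H and Sylow p-subgroup Q of H, μ_p(H) = μ_p(N_H(Q)). Let G be a finite group acting transitively on a finite nonempty set X, P a Sylow p-subgroup of G, N = N_G(P), and let y ∈ X be such that the N-orbit of y has cardinality coprime to p. Then μ_p(Stab_G(y)) = μ_p(Stab_N(y)). -/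
/-! The `N`-orbit of `y` has size `[N : Stab_N(y)]`, which is prime to `p`, so the subgroup
`Stab_N(y)` contains the normal Sylow subgroup `P` of `N`. Hence `P` is a Sylow `p`-subgroup of
`H = Stab_G(y)`, its normalizer in `H` is `N ∩ H = Stab_N(y)`, and McKay for `H` gives the claim.
The only representation theory involved is that `μ_p` is invariant under group isomorphisms:
restriction along an isomorphism is an equivalence of representation categories, and
equivalences preserve simplicity. -/

open CategoryTheory

/-- `mu p H` is the number of isomorphism classes of irreducible finite-dimensional
complex representations of `H` whose dimension is coprime to `p`. -/
noncomputable def mu (p : ℕ) (H : Type) [Group H] : ℕ :=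
  Nat.card {c : _root_.Quotient (isIsomorphicSetoid (FDRep ℂ H)) //
    ∃ V : FDRep ℂ H, Quotient.mk (isIsomorphicSetoid (FDRep ℂ H)) V = c ∧
      Simple V ∧ p.Coprime (Module.finrank ℂ V)}

namespace CategoryTheory

variable {C D : Type*} [Category C] [Category D]

def Equivalence.isoClassesEquiv (E : C ≌ D) :
    _root_.Quotient (isIsomorphicSetoid C) ≃ _root_.Quotient (isIsomorphicSetoid D) where
  toFun := Quotient.map E.functor.obj fun _ _ ⟨i⟩ => ⟨E.functor.mapIso i⟩
  invFun := Quotient.map E.inverse.obj fun _ _ ⟨i⟩ => ⟨E.inverse.mapIso i⟩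
  left_inv := by
    rintro ⟨X⟩
    exact _root_.Quotient.sound ⟨(E.unitIso.app X).symm⟩
  right_inv := by
    rintro ⟨Y⟩
    exact _root_.Quotient.sound ⟨E.counitIso.app Y⟩

@[simp]
lemma Equivalence.isoClassesEquiv_mk (E : C ≌ D) (X : C) :
    E.isoClassesEquiv (_root_.Quotient.mk _ X) = _root_.Quotient.mk _ (E.functor.obj X) :=
  rfl

lemma exists_mk_eq_and_iff {P : C → Prop} (hP : ∀ {X Y : C}, (X ≅ Y) → P X → P Y) (X : C) :
    (∃ V, _root_.Quotient.mk (isIsomorphicSetoid C) V = _root_.Quotient.mk _ X ∧ P V) ↔ P X :=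
  ⟨fun ⟨_, hV, hPV⟩ => (Quotient.exact hV).elim fun i => hP i hPV, fun h => ⟨X, rfl, h⟩⟩

end CategoryTheory

lemma FDRep.simple_and_coprime_finrank_of_iso {k G : Type*} [Field k] [Monoid G] (p : ℕ)
    {V W : FDRep k G} (i : V ≅ W) (hV : Simple V ∧ p.Coprime (Module.finrank k V)) :
    Simple W ∧ p.Coprime (Module.finrank k W) :=
  have := hV.1
  ⟨Simple.of_iso i.symm, (FDRep.isoToLinearEquiv i).finrank_eq ▸ hV.2⟩

lemma mu_congr {H K : Type} [Group H] [Group K] (p : ℕ) (e : H ≃* K) : mu p H = mu p K := by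
  let E : FDRep ℂ H ≌ FDRep ℂ K := Action.resEquiv _ e.symm
  refine Nat.card_congr (E.isoClassesEquiv.subtypeEquiv fun c => ?_)
  induction c using Quotient.inductionOn with
  | h V =>
    rw [E.isoClassesEquiv_mk, exists_mk_eq_and_iff (FDRep.simple_and_coprime_finrank_of_iso p),
      exists_mk_eq_and_iff (FDRep.simple_and_coprime_finrank_of_iso p), simple_obj_iff]
    rfl

theorem IsPGroup.le_of_not_dvd_index {G : Type*} [Group G] [Finite G] {p : ℕ} [Fact p.Prime]
    {P H : Subgroup G} [P.Normal] (hP : IsPGroup p P) (hH : ¬ p ∣ H.index) : P ≤ H := by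
  obtain ⟨R⟩ : Nonempty (Sylow p H) := inferInstance
  have hR : ¬ p ∣ (R.map H.subtype).index := by
    rw [Subgroup.index_map_subtype]
    exact Nat.Prime.not_dvd_mul Fact.out R.not_dvd_index hH
  exact (hP.le_sylow_of_normal ((R.2.map H.subtype).toSylow hR)).trans (Subgroup.map_subtype_le _)

theorem Sylow.le_stabilizer_of_coprime_card_orbit_normalizer {p : ℕ} [Fact p.Prime]
    {G : Type*} [Group G] [Finite G] {X : Type*} [MulAction G X] (P : Sylow p G) (y : X)
    (hy : p.Coprime (Nat.card (MulAction.orbit (Subgroup.normalizer ((P : Subgroup G) : Set G)) y))) :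
    (P : Subgroup G) ≤ MulAction.stabilizer G y := by
  set N := Subgroup.normalizer ((P : Subgroup G) : Set G)
  have hindex : ¬ p ∣ (MulAction.stabilizer N y).index := by
    rw [MulAction.index_stabilizer]
    exact (Nat.Prime.coprime_iff_not_dvd Fact.out).mp hy
  have hPN : IsPGroup p ((P : Subgroup G).subgroupOf N) := P.2.comap_subtype
  intro g hg
  exact hPN.le_of_not_dvd_index hindex (show (⟨g, Subgroup.le_normalizer hg⟩ : N) ∈ _ from hg)

def Subgroup.subgroupOfCommEquiv {G : Type*} [Group G] (H K : Subgroup G) :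
    H.subgroupOf K ≃* K.subgroupOf H where
  toFun x := ⟨⟨x.1.1, x.2⟩, x.1.2⟩
  invFun x := ⟨⟨x.1.1, x.2⟩, x.1.2⟩
  map_mul' _ _ := rfl

theorem mu_stabilizer_eq_of_mckay_general {p : ℕ} [Fact p.Prime]
    (MC : ∀ (H : Type) [Group H] [Fintype H] (Q : Sylow p H),
      mu p H = mu p (Subgroup.normalizer ((Q : Subgroup H) : Set H)))
    {G : Type} [Group G] [Fintype G]
    {X : Type} [MulAction G X]
    (P : Sylow p G) (y : X)
    (hy : p.Coprime (Nat.card (MulAction.orbit (Subgroup.normalizer ((P : Subgroup G) : Set G)) y))) :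
    mu p (MulAction.stabilizer G y)
      = mu p (MulAction.stabilizer (Subgroup.normalizer ((P : Subgroup G) : Set G)) y) := by
  have hPH := P.le_stabilizer_of_coprime_card_orbit_normalizer y hy
  have := Fintype.ofFinite (MulAction.stabilizer G y)
  rw [MC _ (P.subtype hPH), Sylow.coe_subtype, ← Subgroup.subgroupOf_normalizer_eq hPH]
  -- `MulAction.stabilizer N y` is definitionally `(MulAction.stabilizer G y).subgroupOf N`.
  exact mu_congr p (Subgroup.subgroupOfCommEquiv _ _)

/-- Assuming the McKay Conjecture for `p`, if `G` acts transitively on `X` and the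
`N = N_G(P)`-orbit of `y` has cardinality coprime to `p`, then
`μ_p(Stab_G(y)) = μ_p(Stab_N(y))`. -/
theorem mu_stabilizer_eq_of_mckay {p : ℕ} [Fact p.Prime]
    (MC : ∀ (H : Type) [Group H] [Fintype H] (Q : Sylow p H),
      mu p H = mu p (Subgroup.normalizer ((Q : Subgroup H) : Set H)))
    {G : Type} [Group G] [Fintype G]
    {X : Type} [Fintype X] [Nonempty X] [MulAction G X] [MulAction.IsPretransitive G X]
    (P : Sylow p G) (y : X)
    (hy : p.Coprime (Nat.card (MulAction.orbit (Subgroup.normalizer ((P : Subgroup G) : Set G)) y))) :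
    mu p (MulAction.stabilizer G y)
      = mu p (MulAction.stabilizer (Subgroup.normalizer ((P : Subgroup G) : Set G)) y) :=
  mu_stabilizer_eq_of_mckay_general MC P y hy
end

section
/- Let p be a prime and L a finite group containing an element z of the center of L which lies in the commutator subgroup [L, L], and let k be a positive integer divisible by p. Then there is no irreducible finite-dimensional complex representation ρ of L of dimension coprime to p such that ρ(z) = λ · id for a complex number λ of multiplicative order k. -/
open CategoryTheory

/-- If `z` is central in a finite group `L`, lies in the commutator subgroup, and `k` is
divisible by `p`, then there is no irreducible complex representation of `L` of dimension
coprime to `p` on which `z` acts as `λ · id` with `λ` of multiplicative order `k`. -/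
theorem no_coprime_irrep_of_central_order_dvd {p : ℕ} [Fact p.Prime]
    {L : Type} [Group L] [Fintype L]
    (z : L) (hz : z ∈ Subgroup.center L) (hz' : z ∈ commutator L)
    (k : ℕ) (hkpos : 0 < k) (hpk : p ∣ k) :
    ¬ ∃ (V : FDRep ℂ L) (lam : ℂ), Simple V ∧ p.Coprime (Module.finrank ℂ V) ∧
        orderOf lam = k ∧ V.ρ z = lam • LinearMap.id := by
  rintro ⟨V, lam, hsimp, hcop, hord, hact⟩
  set d := Module.finrank ℂ V with hd
  -- the determinant homomorphism into the abelian group ℂˣ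
  let φ : L →* ℂˣ :=
    (Units.map (LinearMap.det : (V →ₗ[ℂ] V) →* ℂ)).comp V.ρ.toHomUnits
  have hker : φ z = 1 := Abelianization.commutator_subset_ker φ hz'
  have hdet : LinearMap.det (V.ρ z) = 1 := by
    have := congrArg Units.val hker
    simpa [φ] using this
  have hpow : lam ^ d = 1 := by
    rw [hact] at hdet
    simpa [LinearMap.det_smul, LinearMap.det_id] using hdet
  have hkd : k ∣ d := hord ▸ orderOf_dvd_of_pow_eq_one hpow
  have hpd : p ∣ d := hpk.trans hkd
  exact ((Nat.Prime.coprime_iff_not_dvd (Fact.out)).mp hcop) hpd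
end
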